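/- arXiv:2408.16687 — 4 statements merged into one kernel-verified Lean document; each statement's English description precedes it below -/
import Mathlib

section
/- Riesz–Thorin interpolation applied to local walks: if a stochastic bipartite walk operator A with stationary operator Π (also stochastic) satisfies ‖A − Π‖_{2→2} ≤ γ, then for every q ≥ 2, ‖A − Π‖_{q→q} ≤ γ^{2/q} · 2^{1−2/q}. -/
/-!
Write `A - Π` as a matrix `M`. Each row of `M` is the difference of two probability vectors, so
`∑_a |M b a| ≤ 2`, i.e. `‖M‖_{∞→∞} ≤ 2`, and the claim is the Riesz–Thorin bound between the
exponents `∞` and `2`, proved by the complex method. For `‖f‖_q ≤ 1` and `‖g‖_{q'} ≤ 1` the entire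
function `Φ z = ⟨sgn g |g|^{q'(1 - z/2)}, M (sgn f |f|^{qz/2})⟩_w` is bounded by `2` on `re z = 0`
(row sums) and by `γ` on `re z = 1` (Cauchy–Schwarz and the `L²` bound), and `Φ (2/q) = ⟨g, M f⟩_w`.
Hadamard's three lines theorem gives `⟨g, M f⟩_w ≤ 2^{1-2/q} γ^{2/q}`; duality in `g` and
homogeneity in `f` turn this into the operator bound.
-/

open Finset BigOperators

/-- `L^q` norm with respect to the probability mass function `μ`. -/
noncomputable def pnorm {α : Type} [Fintype α] (μ : α → ℝ) (q : ℝ) (f : α → ℝ) : ℝ :=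
  (∑ x, μ x * |f x| ^ q) ^ (1 / q)

/-- `sgn x * |x| ^ s` as an entire function of `s`; it vanishes identically when `x = 0`. -/
noncomputable def signedCpow (x : ℝ) (s : ℂ) : ℂ :=
  (SignType.sign x : ℝ) * Complex.exp (s * Real.log |x|)

lemma abs_sign_le_one (x : ℝ) : |(SignType.sign x : ℝ)| ≤ 1 := by
  rcases lt_trichotomy x 0 with hx | rfl | hx <;> simp [*]

lemma norm_signedCpow_eq (x : ℝ) (s : ℂ) :
    ‖signedCpow x s‖ = |(SignType.sign x : ℝ)| * Real.exp (s.re * Real.log |x|) := by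
  simp [signedCpow, Complex.norm_exp]

lemma norm_signedCpow_le_exp (x : ℝ) (s : ℂ) :
    ‖signedCpow x s‖ ≤ Real.exp (|s.re| * |Real.log (|x|)|) := by
  rw [norm_signedCpow_eq]
  calc _ ≤ 1 * Real.exp (s.re * Real.log |x|) := by
        gcongr; exact abs_sign_le_one x
    _ ≤ _ := by
        rw [one_mul, ← abs_mul]
        exact Real.exp_le_exp.mpr (le_abs_self _)

lemma norm_signedCpow_of_re_ne_zero (x : ℝ) {s : ℂ} (hs : s.re ≠ 0) :
    ‖signedCpow x s‖ = |x| ^ s.re := by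
  rcases eq_or_ne x 0 with rfl | hx
  · simp [signedCpow, Real.zero_rpow hs]
  · rw [norm_signedCpow_eq, Real.rpow_def_of_pos (abs_pos.mpr hx), mul_comm s.re]
    rcases lt_or_gt_of_ne hx with hx | hx <;> simp [hx]

lemma norm_signedCpow_le_one_of_re_eq_zero (x : ℝ) {s : ℂ} (hs : s.re = 0) :
    ‖signedCpow x s‖ ≤ 1 := by
  simpa [norm_signedCpow_eq, hs] using abs_sign_le_one x

lemma sq_norm_signedCpow_of_re_ne_zero (x : ℝ) {s : ℂ} (hs : s.re ≠ 0) :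
    ‖signedCpow x s‖ ^ 2 = |x| ^ (2 * s.re) := by
  rw [norm_signedCpow_of_re_ne_zero x hs, mul_comm, Real.rpow_mul (abs_nonneg x)]
  norm_cast

@[simp] lemma signedCpow_one (x : ℝ) : signedCpow x 1 = x := by
  rcases eq_or_ne x 0 with rfl | hx
  · simp [signedCpow]
  · rw [signedCpow, one_mul, ← Complex.ofReal_exp, Real.exp_log (abs_pos.mpr hx)]
    exact_mod_cast sign_mul_abs x

lemma differentiable_signedCpow (x : ℝ) : Differentiable ℂ (signedCpow x) :=
  (differentiable_id.mul_const _).cexp.const_mul _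

section pnorm

open Filter Topology

variable {α : Type} [Fintype α] {μ : α → ℝ}

lemma sum_mul_abs_rpow_nonneg (hμ : ∀ x, 0 ≤ μ x) (q : ℝ) (f : α → ℝ) :
    0 ≤ ∑ x, μ x * |f x| ^ q :=
  sum_nonneg fun x _ => mul_nonneg (hμ x) (Real.rpow_nonneg (abs_nonneg _) q)

lemma pnorm_nonneg (hμ : ∀ x, 0 ≤ μ x) (q : ℝ) (f : α → ℝ) : 0 ≤ pnorm μ q f :=
  Real.rpow_nonneg (sum_mul_abs_rpow_nonneg hμ q f) _

lemma pnorm_rpow_eq_sum (hμ : ∀ x, 0 ≤ μ x) {q : ℝ} (hq : q ≠ 0) (f : α → ℝ) :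
    pnorm μ q f ^ q = ∑ x, μ x * |f x| ^ q := by
  rw [pnorm, one_div, Real.rpow_inv_rpow (sum_mul_abs_rpow_nonneg hμ q f) hq]

lemma pnorm_two_eq_sqrt (f : α → ℝ) : pnorm μ 2 f = √(∑ x, μ x * f x ^ 2) := by
  simp [pnorm, Real.sqrt_eq_rpow]

lemma sum_mul_sq_le_of_pnorm_two_le {β : Type} [Fintype β] {ν : β → ℝ} {u : β → ℝ} {f : α → ℝ}
    {C : ℝ} (hC : 0 ≤ C) (hμ : ∀ x, 0 ≤ μ x) (h : pnorm ν 2 u ≤ C * pnorm μ 2 f) :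
    ∑ y, ν y * u y ^ 2 ≤ C ^ 2 * ∑ x, μ x * f x ^ 2 := by
  have hf : 0 ≤ ∑ x, μ x * f x ^ 2 := sum_nonneg fun x _ => mul_nonneg (hμ x) (sq_nonneg _)
  rw [pnorm_two_eq_sqrt, pnorm_two_eq_sqrt, ← Real.sqrt_sq hC, ← Real.sqrt_mul (sq_nonneg C)] at h
  exact (Real.sqrt_le_sqrt_iff (mul_nonneg (sq_nonneg C) hf)).mp h

/-- Duality: the test function `sgn u * (|u| / ‖u‖_q) ^ (q - 1)` attains the bound. -/
theorem pnorm_le_of_forall_sum_mul_le (hμ : ∀ x, 0 ≤ μ x) {q q' : ℝ}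
    (hqq' : q.HolderConjugate q') (u : α → ℝ) {K : ℝ}
    (h : ∀ g : α → ℝ, ∑ x, μ x * |g x| ^ q' ≤ 1 → ∑ x, μ x * g x * u x ≤ K) :
    pnorm μ q u ≤ K := by
  rcases (pnorm_nonneg hμ q u).eq_or_lt with hN | hN <;> set N := pnorm μ q u
  · calc N = 0 := hN.symm
      _ ≤ K := by simpa [Real.zero_rpow hqq'.symm.ne_zero] using h 0
  set t : α → ℝ := fun x => |u x| / N
  have ht : ∑ x, μ x * t x ^ q = 1 := by
    calc ∑ x, μ x * t x ^ q = (∑ x, μ x * |u x| ^ q) / N ^ q := by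
          rw [sum_div]
          refine sum_congr rfl fun x _ => ?_
          rw [Real.div_rpow (abs_nonneg _) hN.le, mul_div_assoc]
      _ = 1 := by
          rw [← pnorm_rpow_eq_sum hμ hqq'.ne_zero]
          exact div_self (Real.rpow_pos_of_pos hN q).ne'
  have ht0 (x : α) : 0 ≤ t x := div_nonneg (abs_nonneg _) hN.le
  refine le_of_eq_of_le ?_ (h (fun x => SignType.sign (u x) * t x ^ (q - 1)) ?_)
  · calc N = N * ∑ x, μ x * t x ^ q := by rw [ht, mul_one]
      _ = _ := by
        rw [mul_sum]
        refine sum_congr rfl fun x _ => ?_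
        have hu : (SignType.sign (u x) : ℝ) * u x = N * t x := by
          rw [sign_mul_self, mul_div_cancel₀ _ hN.ne']
        have htq : t x ^ q = t x * t x ^ (q - 1) := by
          rw [← Real.rpow_one_add' (ht0 x) (by simpa using hqq'.ne_zero)]
          ring_nf
        rw [htq]
        linear_combination (-(μ x * t x ^ (q - 1))) * hu
  · calc ∑ x, μ x * |SignType.sign (u x) * t x ^ (q - 1)| ^ q'
        ≤ ∑ x, μ x * t x ^ q := by
          refine sum_le_sum fun x _ => mul_le_mul_of_nonneg_left ?_ (hμ x)
          calc |(SignType.sign (u x) : ℝ) * t x ^ (q - 1)| ^ q'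
              ≤ (t x ^ (q - 1)) ^ q' := by
                refine Real.rpow_le_rpow (abs_nonneg _) ?_ hqq'.symm.nonneg
                rw [abs_mul, abs_of_nonneg (Real.rpow_nonneg (ht0 x) _)]
                exact mul_le_of_le_one_left (Real.rpow_nonneg (ht0 x) _)
                  (abs_sign_le_one _)
            _ = t x ^ q := by rw [← Real.rpow_mul (ht0 x), hqq'.sub_one_mul_conj]
      _ = 1 := ht

lemma sum_mul_abs_smul_rpow {c : ℝ} (hc : 0 < c) (q : ℝ) (f : α → ℝ) :
    ∑ x, μ x * |(c • f) x| ^ q = c ^ q * ∑ x, μ x * |f x| ^ q := by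
  rw [mul_sum]
  refine sum_congr rfl fun x _ => ?_
  rw [Pi.smul_apply, smul_eq_mul, abs_mul, abs_of_pos hc, Real.mul_rpow hc.le (abs_nonneg _)]
  ring

/-- Testing `h` on `f / t` for every `t > ‖f‖_q` avoids dividing by a vanishing norm. -/
theorem le_mul_pnorm_of_forall_le {φ : (α → ℝ) → ℝ} (hφ : ∀ (c : ℝ) f, 0 < c → φ (c • f) = c * φ f)
    (hμ : ∀ x, 0 ≤ μ x) {q : ℝ} (hq : 0 < q) {K : ℝ}
    (h : ∀ f, ∑ x, μ x * |f x| ^ q ≤ 1 → φ f ≤ K) (f : α → ℝ) : φ f ≤ K * pnorm μ q f := by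
  have hN := pnorm_nonneg hμ q f
  have hbound (t : ℝ) (ht : pnorm μ q f < t) : φ f ≤ K * t := by
    have ht0 : 0 < t := hN.trans_lt ht
    have hball : ∑ x, μ x * |(t⁻¹ • f) x| ^ q ≤ 1 := by
      rw [sum_mul_abs_smul_rpow (inv_pos.2 ht0), ← pnorm_rpow_eq_sum hμ hq.ne',
        Real.inv_rpow ht0.le, inv_mul_le_one₀ (Real.rpow_pos_of_pos ht0 q)]
      exact Real.rpow_le_rpow hN ht.le hq.le
    have := h _ hball
    rwa [hφ _ _ (inv_pos.2 ht0), inv_mul_le_iff₀ ht0, mul_comm] at this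
  have hlim : Tendsto (fun t => K * t) (𝓝[>] pnorm μ q f) (𝓝 (K * pnorm μ q f)) :=
    ((continuous_const_mul K).tendsto _).mono_left nhdsWithin_le_nhds
  exact ge_of_tendsto hlim (eventually_nhdsWithin_of_forall hbound)

end pnorm

section weightedPairing

open Matrix

variable {α β : Type} [Fintype α]

lemma Matrix.re_map_ofReal_mulVec (M : Matrix β α ℝ) (v : α → ℂ) (b : β) :
    ((M.map ((↑) : ℝ → ℂ) *ᵥ v) b).re = (M *ᵥ fun a => (v a).re) b := by
  simp [Matrix.mulVec, dotProduct, Complex.re_sum]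

lemma Matrix.im_map_ofReal_mulVec (M : Matrix β α ℝ) (v : α → ℂ) (b : β) :
    ((M.map ((↑) : ℝ → ℂ) *ᵥ v) b).im = (M *ᵥ fun a => (v a).im) b := by
  simp [Matrix.mulVec, dotProduct, Complex.im_sum]

lemma Matrix.norm_map_ofReal_mulVec_le (M : Matrix β α ℝ) (v : α → ℂ) (b : β) :
    ‖(M.map ((↑) : ℝ → ℂ) *ᵥ v) b‖ ≤ ∑ a, |M b a| * ‖v a‖ :=
  (norm_sum_le _ _).trans_eq (by simp)

variable [Fintype β]

lemma Matrix.sum_mul_norm_map_ofReal_mulVec_sq_le {p : α → ℝ} {w : β → ℝ} {M : Matrix β α ℝ}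
    {C : ℝ} (hM : ∀ f, ∑ b, w b * (M *ᵥ f) b ^ 2 ≤ C * ∑ a, p a * f a ^ 2) (v : α → ℂ) :
    ∑ b, w b * ‖(M.map ((↑) : ℝ → ℂ) *ᵥ v) b‖ ^ 2 ≤ C * ∑ a, p a * ‖v a‖ ^ 2 := by
  have hsq (z : ℂ) : ‖z‖ ^ 2 = z.re ^ 2 + z.im ^ 2 := by
    rw [Complex.sq_norm, Complex.normSq_apply]; ring
  simp only [hsq, Matrix.re_map_ofReal_mulVec, Matrix.im_map_ofReal_mulVec, mul_add,
    sum_add_distrib]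
  exact add_le_add (hM _) (hM _)

lemma sum_mul_mul_le_sqrt_mul_sqrt {w : β → ℝ} (hw : ∀ b, 0 ≤ w b) (x y : β → ℝ) :
    ∑ b, w b * x b * y b ≤ √(∑ b, w b * x b ^ 2) * √(∑ b, w b * y b ^ 2) := by
  have key := Real.sum_mul_le_sqrt_mul_sqrt univ (fun b => √(w b) * x b) (fun b => √(w b) * y b)
  simp only [mul_pow, Real.sq_sqrt (hw _)] at key
  refine le_of_eq_of_le (sum_congr rfl fun b _ => ?_) key
  linear_combination (-(x b * y b)) * Real.mul_self_sqrt (hw b)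

noncomputable def weightedPairing (w : β → ℝ) (M : Matrix β α ℝ) (u : β → ℂ) (v : α → ℂ) : ℂ :=
  ∑ b, (w b : ℂ) * u b * (M.map ((↑) : ℝ → ℂ) *ᵥ v) b

variable {w : β → ℝ} {M : Matrix β α ℝ}

lemma norm_weightedPairing_le (hw : ∀ b, 0 ≤ w b) (u : β → ℂ) (v : α → ℂ) :
    ‖weightedPairing w M u v‖ ≤ ∑ b, w b * ‖u b‖ * ‖(M.map ((↑) : ℝ → ℂ) *ᵥ v) b‖ :=
  (norm_sum_le _ _).trans_eq (sum_congr rfl fun b _ => by simp [abs_of_nonneg (hw b)])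

lemma norm_weightedPairing_le_of_norm_le_one (hw : ∀ b, 0 ≤ w b) {C₀ : ℝ}
    (hrow : ∀ b, ∑ a, |M b a| ≤ C₀) (u : β → ℂ) {v : α → ℂ} (hv : ∀ a, ‖v a‖ ≤ 1) :
    ‖weightedPairing w M u v‖ ≤ C₀ * ∑ b, w b * ‖u b‖ := by
  refine (norm_weightedPairing_le hw u v).trans ?_
  rw [mul_sum]
  refine sum_le_sum fun b _ => ?_
  calc w b * ‖u b‖ * ‖(M.map ((↑) : ℝ → ℂ) *ᵥ v) b‖ ≤ w b * ‖u b‖ * C₀ := by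
        gcongr
        · exact mul_nonneg (hw b) (norm_nonneg _)
        calc _ ≤ ∑ a, |M b a| * ‖v a‖ := M.norm_map_ofReal_mulVec_le v b
          _ ≤ ∑ a, |M b a| := sum_le_sum fun a _ => mul_le_of_le_one_right (abs_nonneg _) (hv a)
          _ ≤ C₀ := hrow b
    _ = C₀ * (w b * ‖u b‖) := by ring

lemma norm_weightedPairing_le_sqrt_mul_sqrt (hw : ∀ b, 0 ≤ w b) {p : α → ℝ} {C₁ : ℝ}
    (hC₁ : 0 ≤ C₁) (hL2 : ∀ f, ∑ b, w b * (M *ᵥ f) b ^ 2 ≤ C₁ ^ 2 * ∑ a, p a * f a ^ 2)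
    (u : β → ℂ) (v : α → ℂ) :
    ‖weightedPairing w M u v‖ ≤ C₁ * √(∑ b, w b * ‖u b‖ ^ 2) * √(∑ a, p a * ‖v a‖ ^ 2) := by
  calc ‖weightedPairing w M u v‖
      ≤ √(∑ b, w b * ‖u b‖ ^ 2) * √(∑ b, w b * ‖(M.map ((↑) : ℝ → ℂ) *ᵥ v) b‖ ^ 2) :=
        (norm_weightedPairing_le hw u v).trans (sum_mul_mul_le_sqrt_mul_sqrt hw _ _)
    _ ≤ √(∑ b, w b * ‖u b‖ ^ 2) * √(C₁ ^ 2 * ∑ a, p a * ‖v a‖ ^ 2) := by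
        gcongr; exact Matrix.sum_mul_norm_map_ofReal_mulVec_sq_le hL2 v
    _ = _ := by rw [Real.sqrt_mul (sq_nonneg C₁), Real.sqrt_sq hC₁]; ring

lemma differentiable_weightedPairing {u : ℂ → β → ℂ} {v : ℂ → α → ℂ}
    (hu : ∀ b, Differentiable ℂ (u · b)) (hv : ∀ a, Differentiable ℂ (v · a)) :
    Differentiable ℂ fun z => weightedPairing w M (u z) (v z) := by
  simp only [weightedPairing, Matrix.mulVec, dotProduct]
  fun_prop

lemma bddAbove_norm_weightedPairing (hw : ∀ b, 0 ≤ w b) {S : Set ℂ} {u : ℂ → β → ℂ}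
    {v : ℂ → α → ℂ} {U : β → ℝ} {V : α → ℝ} (hu : ∀ z ∈ S, ∀ b, ‖u z b‖ ≤ U b)
    (hv : ∀ z ∈ S, ∀ a, ‖v z a‖ ≤ V a) :
    BddAbove ((norm ∘ fun z => weightedPairing w M (u z) (v z)) '' S) := by
  refine ⟨∑ b, w b * U b * ∑ a, |M b a| * V a, ?_⟩
  rintro _ ⟨z, hz, rfl⟩
  refine (norm_weightedPairing_le hw _ _).trans (sum_le_sum fun b _ => ?_)
  refine mul_le_mul (mul_le_mul_of_nonneg_left (hu z hz b) (hw b)) ?_ (norm_nonneg _)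
    (mul_nonneg (hw b) ((norm_nonneg _).trans (hu z hz b)))
  exact (M.norm_map_ofReal_mulVec_le _ b).trans
    (sum_le_sum fun a _ => mul_le_mul_of_nonneg_left (hv z hz a) (abs_nonneg _))

end weightedPairing

section interpolation

open Matrix Complex HadamardThreeLines

variable {α β : Type} [Fintype α] [Fintype β] {p : α → ℝ} {w : β → ℝ} {M : Matrix β α ℝ}

lemma weightedPairing_ofReal (f : α → ℝ) (g : β → ℝ) :
    weightedPairing w M (fun b => (g b : ℂ)) (fun a => (f a : ℂ)) =
      ((∑ b, w b * g b * (M *ᵥ f) b : ℝ) : ℂ) := by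
  simp [weightedPairing, Matrix.mulVec, dotProduct]

noncomputable def interpPairing (w : β → ℝ) (M : Matrix β α ℝ) (q q' : ℝ) (f : α → ℝ)
    (g : β → ℝ) (z : ℂ) : ℂ :=
  weightedPairing w M (fun b => signedCpow (g b) (q' * (1 - z / 2)))
    (fun a => signedCpow (f a) (q / 2 * z))

variable {q q' : ℝ} {f : α → ℝ} {g : β → ℝ}

lemma interpPairing_two_div (hqq' : q.HolderConjugate q') :
    interpPairing w M q q' f g (2 / q : ℝ) = ((∑ b, w b * g b * (M *ᵥ f) b : ℝ) : ℂ) := by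
  have hF : (q / 2 * (2 / q) : ℂ) = 1 := by
    exact_mod_cast (by field_simp [hqq'.ne_zero] : q / 2 * (2 / q) = 1)
  have hG : (q' * (1 - 2 / q / 2) : ℂ) = 1 := by
    have : q' * (1 - 2 / q / 2) = 1 := by
      rw [show 2 / q / 2 = q⁻¹ by ring, hqq'.one_sub_inv, mul_inv_cancel₀ hqq'.symm.ne_zero]
    exact_mod_cast this
  simp [interpPairing, hF, hG, weightedPairing_ofReal]

lemma differentiable_interpPairing : Differentiable ℂ (interpPairing w M q q' f g) :=
  differentiable_weightedPairing (fun _ => (differentiable_signedCpow _).comp (by fun_prop))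
    (fun _ => (differentiable_signedCpow _).comp (by fun_prop))

lemma bddAbove_norm_interpPairing (hw : ∀ b, 0 ≤ w b) (hq : 0 ≤ q) (hq' : 0 ≤ q') :
    BddAbove ((norm ∘ interpPairing w M q q' f g) '' verticalClosedStrip 0 1) := by
  refine bddAbove_norm_weightedPairing hw (U := fun b => Real.exp (q' * |Real.log (|g b|)|))
    (V := fun a => Real.exp (q / 2 * |Real.log (|f a|)|)) ?_ ?_
  · rintro z ⟨hz0, hz1⟩ b
    refine (norm_signedCpow_le_exp _ _).trans (Real.exp_le_exp.mpr ?_)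
    have hre : ((q' * (1 - z / 2) : ℂ)).re = q' * (1 - z.re / 2) := by simp
    rw [hre, abs_mul, abs_of_nonneg hq', abs_of_nonneg (by linarith)]
    gcongr
    nlinarith
  · rintro z ⟨hz0, hz1⟩ a
    refine (norm_signedCpow_le_exp _ _).trans (Real.exp_le_exp.mpr ?_)
    have hre : ((q / 2 * z : ℂ)).re = q / 2 * z.re := by simp
    rw [hre, abs_mul, abs_of_nonneg (by positivity), abs_of_nonneg hz0]
    gcongr
    nlinarith

lemma norm_interpPairing_le_of_re_eq_zero (hw : ∀ b, 0 ≤ w b) {C₀ : ℝ} (hC₀ : 0 ≤ C₀)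
    (hrow : ∀ b, ∑ a, |M b a| ≤ C₀) (hq' : q' ≠ 0) (hg : ∑ b, w b * |g b| ^ q' ≤ 1) {z : ℂ}
    (hz : z.re = 0) : ‖interpPairing w M q q' f g z‖ ≤ C₀ := by
  have hG (b : β) : ‖signedCpow (g b) (q' * (1 - z / 2))‖ = |g b| ^ q' := by
    rw [norm_signedCpow_of_re_ne_zero _ (by simpa [hz] using hq')]
    simp [hz]
  calc ‖interpPairing w M q q' f g z‖ ≤ C₀ * ∑ b, w b * |g b| ^ q' := by
        simpa only [interpPairing, hG] using norm_weightedPairing_le_of_norm_le_one hw hrow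
          (fun b => signedCpow (g b) (q' * (1 - z / 2)))
          (v := fun a => signedCpow (f a) (q / 2 * z)) fun a => norm_signedCpow_le_one_of_re_eq_zero _ (by simp [hz])
    _ ≤ C₀ := mul_le_of_le_one_right hC₀ hg

lemma norm_interpPairing_le_of_re_eq_one (hw : ∀ b, 0 ≤ w b) {C₁ : ℝ} (hC₁ : 0 ≤ C₁)
    (hL2 : ∀ f, ∑ b, w b * (M *ᵥ f) b ^ 2 ≤ C₁ ^ 2 * ∑ a, p a * f a ^ 2) (hq : q ≠ 0)
    (hq' : q' ≠ 0) (hf : ∑ a, p a * |f a| ^ q ≤ 1) (hg : ∑ b, w b * |g b| ^ q' ≤ 1) {z : ℂ}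
    (hz : z.re = 1) : ‖interpPairing w M q q' f g z‖ ≤ C₁ := by
  have hG (b : β) : ‖signedCpow (g b) (q' * (1 - z / 2))‖ ^ 2 = |g b| ^ q' := by
    have hre : ((q' * (1 - z / 2) : ℂ)).re = q' / 2 := by simp [hz]; ring
    rw [sq_norm_signedCpow_of_re_ne_zero _ (by simpa [hre] using hq'), hre]
    congr 1; ring
  have hF (a : α) : ‖signedCpow (f a) (q / 2 * z)‖ ^ 2 = |f a| ^ q := by
    have hre : ((q / 2 * z : ℂ)).re = q / 2 := by simp [hz]
    rw [sq_norm_signedCpow_of_re_ne_zero _ (by simpa [hre] using hq), hre]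
    congr 1; ring
  calc ‖interpPairing w M q q' f g z‖
      ≤ C₁ * √(∑ b, w b * |g b| ^ q') * √(∑ a, p a * |f a| ^ q) := by
        simpa only [interpPairing, hG, hF] using norm_weightedPairing_le_sqrt_mul_sqrt hw hC₁ hL2
          (fun b => signedCpow (g b) (q' * (1 - z / 2))) (fun a => signedCpow (f a) (q / 2 * z))
    _ ≤ C₁ * 1 * 1 := by gcongr <;> exact Real.sqrt_le_one.mpr ‹_›
    _ = C₁ := by ring

theorem sum_mul_mulVec_le_interp (hw : ∀ b, 0 ≤ w b) {C₀ C₁ : ℝ} (hC₀ : 0 ≤ C₀) (hC₁ : 0 ≤ C₁)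
    (hrow : ∀ b, ∑ a, |M b a| ≤ C₀)
    (hL2 : ∀ f, ∑ b, w b * (M *ᵥ f) b ^ 2 ≤ C₁ ^ 2 * ∑ a, p a * f a ^ 2)
    (hqq' : q.HolderConjugate q') (hq : 2 ≤ q)
    (hf : ∑ a, p a * |f a| ^ q ≤ 1) (hg : ∑ b, w b * |g b| ^ q' ≤ 1) :
    ∑ b, w b * g b * (M *ᵥ f) b ≤ C₀ ^ (1 - 2 / q) * C₁ ^ (2 / q) := by
  have hθ : ((2 / q : ℝ) : ℂ) ∈ verticalClosedStrip 0 1 :=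
    ⟨by simp only [ofReal_re]; positivity, by simpa using (div_le_one hqq'.pos).mpr hq⟩
  have := norm_le_interp_of_mem_verticalClosedStrip₀₁' _ hθ
    differentiable_interpPairing.diffContOnCl
    (bddAbove_norm_interpPairing hw hqq'.nonneg hqq'.symm.nonneg)
    (fun z hz => norm_interpPairing_le_of_re_eq_zero hw hC₀ hrow hqq'.symm.ne_zero hg hz)
    (fun z hz => norm_interpPairing_le_of_re_eq_one hw hC₁ hL2 hqq'.ne_zero hqq'.symm.ne_zero
      hf hg hz)
  rw [interpPairing_two_div hqq', norm_real, Real.norm_eq_abs, ofReal_re] at this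
  exact (le_abs_self _).trans this

theorem pnorm_mulVec_le_interp (hp : ∀ a, 0 ≤ p a) (hw : ∀ b, 0 ≤ w b) {C₀ C₁ : ℝ}
    (hC₀ : 0 ≤ C₀) (hC₁ : 0 ≤ C₁) (hrow : ∀ b, ∑ a, |M b a| ≤ C₀)
    (hL2 : ∀ f, pnorm w 2 (M *ᵥ f) ≤ C₁ * pnorm p 2 f) {q : ℝ} (hq : 2 ≤ q) (f : α → ℝ) :
    pnorm w q (M *ᵥ f) ≤ C₀ ^ (1 - 2 / q) * C₁ ^ (2 / q) * pnorm p q f := by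
  have hqq' := Real.HolderConjugate.conjExponent (by linarith : 1 < q)
  refine pnorm_le_of_forall_sum_mul_le hw hqq' _ fun g hg => ?_
  refine le_mul_pnorm_of_forall_le (φ := fun f => ∑ b, w b * g b * (M *ᵥ f) b) ?_ hp
    hqq'.pos (fun f hf => ?_) f
  · intro c f _
    simp only [mulVec_smul, Pi.smul_apply, smul_eq_mul, mul_sum]
    exact sum_congr rfl fun b _ => by ring
  · exact sum_mul_mulVec_le_interp hw hC₀ hC₁ hrow
      (fun f => sum_mul_sq_le_of_pnorm_two_le hC₁ hp (hL2 f)) hqq' hq hf hg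

end interpolation

lemma sum_abs_sub_le_two {α : Type} [Fintype α] {x y : α → ℝ} (hx : ∀ a, 0 ≤ x a)
    (hy : ∀ a, 0 ≤ y a) (hx1 : ∑ a, x a = 1) (hy1 : ∑ a, y a = 1) : ∑ a, |x a - y a| ≤ 2 :=
  calc ∑ a, |x a - y a| ≤ ∑ a, (x a + y a) :=
        sum_le_sum fun a _ => (abs_sub _ _).trans_eq <| by
          rw [abs_of_nonneg (hx a), abs_of_nonneg (hy a)]
    _ = 2 := by rw [sum_add_distrib, hx1, hy1]; norm_num

section Markov

variable {α β : Type} [Fintype α] [DecidableEq α] {A : (α → ℝ) →ₗ[ℝ] β → ℝ}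

lemma LinearMap.toMatrix'_nonneg (hpos : ∀ f, (∀ a, 0 ≤ f a) → ∀ b, 0 ≤ A f b) (b : β) (a : α) :
    0 ≤ LinearMap.toMatrix' A b a := by
  rw [LinearMap.toMatrix'_apply]
  exact hpos _ (Pi.single_nonneg.mpr zero_le_one : (0 : α → ℝ) ≤ Pi.single a 1) b

lemma LinearMap.sum_toMatrix'_row (hone : A (fun _ => 1) = fun _ => 1) (b : β) :
    ∑ a, LinearMap.toMatrix' A b a = 1 := by
  have := congr_fun (LinearMap.toMatrix'_mulVec A fun _ => 1) b
  simpa [Matrix.mulVec, dotProduct, hone] using this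

end Markov

theorem riesz_thorin_walk_general {α β : Type} [Fintype α] [Fintype β]
    (p : α → ℝ) (w : β → ℝ) (hp : ∀ a, 0 ≤ p a) (hw : ∀ b, 0 ≤ w b)
    (hp1 : ∑ a, p a = 1)
    (A : (α → ℝ) → β → ℝ) (hlin : IsLinearMap ℝ A)
    (hpos : ∀ f, (∀ a, 0 ≤ f a) → ∀ b, 0 ≤ A f b)
    (hone : A (fun _ => 1) = fun _ => 1)
    (γ : ℝ) (hγ : 0 ≤ γ)
    (h2 : ∀ f, pnorm w 2 (fun b => A f b - ∑ a, p a * f a) ≤ γ * pnorm p 2 f) :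
    ∀ q : ℝ, 2 ≤ q → ∀ f,
      pnorm w q (fun b => A f b - ∑ a, p a * f a)
        ≤ γ ^ ((2:ℝ)/q) * 2 ^ (1 - (2:ℝ)/q) * pnorm p q f := by
  classical
  intro q hq f
  set L := IsLinearMap.mk' A hlin
  set M : Matrix β α ℝ := LinearMap.toMatrix' L - Matrix.of fun _ a => p a
  have hM (f : α → ℝ) : M.mulVec f = fun b => A f b - ∑ a, p a * f a := by
    ext b
    rw [Matrix.sub_mulVec, LinearMap.toMatrix'_mulVec]
    simp [L, Matrix.mulVec, dotProduct]
  have hrow (b : β) : ∑ a, |M b a| ≤ 2 :=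
    sum_abs_sub_le_two (LinearMap.toMatrix'_nonneg (A := L) hpos b) hp
      (LinearMap.sum_toMatrix'_row (A := L) hone b) hp1
  have := pnorm_mulVec_le_interp hp hw zero_le_two hγ hrow (fun f => hM f ▸ h2 f) hq f
  rwa [hM, mul_comm (2 ^ _)] at this

/-- Riesz–Thorin applied to stochastic walks. If a Markov
(stochastic, measure-preserving) operator `A` with stationary operator `Π`
satisfies `‖A − Π‖_{2→2} ≤ γ`, then for every `q ≥ 2`,
`‖A − Π‖_{q→q} ≤ γ^{2/q} · 2^{1−2/q}`. -/
theorem riesz_thorin_walk {α β : Type} [Fintype α] [Fintype β]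
    (p : α → ℝ) (w : β → ℝ) (hp : ∀ a, 0 ≤ p a) (hw : ∀ b, 0 ≤ w b)
    (hp1 : ∑ a, p a = 1) (hw1 : ∑ b, w b = 1)
    (A : (α → ℝ) → β → ℝ) (hlin : IsLinearMap ℝ A)
    (hpos : ∀ f, (∀ a, 0 ≤ f a) → ∀ b, 0 ≤ A f b)
    (hone : A (fun _ => 1) = fun _ => 1)
    (hstat : ∀ f, ∑ b, w b * A f b = ∑ a, p a * f a)
    (γ : ℝ) (hγ : 0 ≤ γ)
    (h2 : ∀ f, pnorm w 2 (fun b => A f b - ∑ a, p a * f a) ≤ γ * pnorm p 2 f) :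
    ∀ q : ℝ, 2 ≤ q → ∀ f,
      pnorm w q (fun b => A f b - ∑ a, p a * f a)
        ≤ γ ^ ((2:ℝ)/q) * 2 ^ (1 - (2:ℝ)/q) * pnorm p q f :=
  riesz_thorin_walk_general p w hp hw hp1 A hlin hpos hone γ hγ h2
end

section
/- Single-variable symmetrization lower bound moment inequality: for any real-valued mean-zero random variable Y with finite q-th moment (q > 1) and any a ∈ ℝ, ‖a + (1/2)Y‖_q ≤ ‖a + rY‖_q, where r is an independent uniform ±1 random bit. -/
open MeasureTheory

private lemma conv2_aux {q : ℝ} (hq : 1 ≤ q) (x y : ℝ) :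
    |x / 2 + y / 2| ^ q ≤ (1 / 2) * |x| ^ q + (1 / 2) * |y| ^ q := by
  have hq0 : (0 : ℝ) ≤ q := le_trans zero_le_one hq
  have h1 : |x / 2 + y / 2| ≤ (1 / 2) * |x| + (1 / 2) * |y| := by
    calc |x / 2 + y / 2| ≤ |x / 2| + |y / 2| := abs_add_le _ _
    _ = (1 / 2) * |x| + (1 / 2) * |y| := by
        rw [abs_div, abs_div]; norm_num; ring
  have h2 := (convexOn_rpow hq).2 (Set.mem_Ici.2 (abs_nonneg x))
    (Set.mem_Ici.2 (abs_nonneg y)) (by norm_num : (0:ℝ) ≤ 1/2)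
    (by norm_num : (0:ℝ) ≤ 1/2) (by norm_num)
  simp only [smul_eq_mul] at h2
  calc |x / 2 + y / 2| ^ q ≤ ((1 / 2) * |x| + (1 / 2) * |y|) ^ q :=
        Real.rpow_le_rpow (abs_nonneg _) h1 hq0
  _ ≤ (1 / 2) * |x| ^ q + (1 / 2) * |y| ^ q := h2

/-- single-variable symmetrization inequality. For a mean-zero
real random variable `Y` with finite `q`-th moment (`q > 1`) and any `a ∈ ℝ`,
`‖a + (1/2)Y‖_q ≤ ‖a + rY‖_q` where `r` is an independent uniform `±1` bit
(so the `q`-th moment on the right averages over `r = ±1`). -/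
theorem single_variable_symmetrization {Ω : Type*} [MeasurableSpace Ω]
    (μ : Measure Ω) [IsProbabilityMeasure μ]
    (Y : Ω → ℝ) (q : ℝ) (hq : 1 < q)
    (hint : Integrable Y μ) (hmean : ∫ ω, Y ω ∂μ = 0)
    (hmom : Integrable (fun ω => |Y ω| ^ q) μ) (a : ℝ) :
    (∫ ω, |a + Y ω / 2| ^ q ∂μ) ^ (1 / q)
      ≤ ((1 / 2) * ∫ ω, |a + Y ω| ^ q ∂μ
         + (1 / 2) * ∫ ω, |a - Y ω| ^ q ∂μ) ^ (1 / q) := by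
  have hq1 : (1 : ℝ) ≤ q := hq.le
  have hq0 : (0 : ℝ) ≤ q := le_trans zero_le_one hq1
  -- integrability of |b + c * Y|^q for any constants
  have hIntGen : ∀ b c : ℝ, Integrable (fun ω => |b + c * Y ω| ^ q) μ := by
    intro b c
    have hmeas : AEStronglyMeasurable (fun ω => |b + c * Y ω| ^ q) μ := by
      have hc : Continuous fun x : ℝ => |b + c * x| ^ q :=
        (Real.continuous_rpow_const hq0).comp
          ((continuous_const.add (continuous_const.mul continuous_id)).abs)
      exact hc.comp_aestronglyMeasurable hint.aestronglyMeasurable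
    have hbound : Integrable
        (fun ω => (1/2) * |2*b| ^ q + (1/2) * (|2*c| ^ q * |Y ω| ^ q)) μ :=
      (integrable_const _).add ((hmom.const_mul _).const_mul _)
    refine hbound.mono hmeas (Filter.Eventually.of_forall fun ω => ?_)
    have h := conv2_aux hq1 (2*b) (2*c*Y ω)
    have he : |b + c * Y ω| ^ q = |2*b/2 + 2*c*Y ω/2| ^ q := by ring_nf
    rw [Real.norm_eq_abs, Real.norm_eq_abs, abs_of_nonneg (Real.rpow_nonneg (abs_nonneg _) q)]
    calc |b + c * Y ω| ^ q ≤ (1/2) * |2*b| ^ q + (1/2) * |2*c*Y ω| ^ q := by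
          rw [he]; exact h
    _ = (1/2) * |2*b| ^ q + (1/2) * (|2*c| ^ q * |Y ω| ^ q) := by
          rw [abs_mul (2*c) (Y ω), Real.mul_rpow (abs_nonneg _) (abs_nonneg _)]
    _ ≤ |(1/2) * |2*b| ^ q + (1/2) * (|2*c| ^ q * |Y ω| ^ q)| := le_abs_self _
  have hIplus : Integrable (fun ω => |a + Y ω| ^ q) μ := by
    simpa using hIntGen a 1
  have hIminus : Integrable (fun ω => |a - Y ω| ^ q) μ := by
    have := hIntGen a (-1); simpa [sub_eq_add_neg, neg_mul, one_mul] using this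
  have hIhalf : Integrable (fun ω => |a + Y ω / 2| ^ q) μ := by
    have := hIntGen a (1/2); simpa [div_eq_mul_inv, mul_comm] using this
  -- Jensen: |a|^q ≤ ∫ |a - Y|^q
  have hIam : Integrable (fun ω => |a - Y ω|) μ := ((integrable_const a).sub hint).abs
  have habs : |a| ≤ ∫ ω, |a - Y ω| ∂μ := by
    have h1 : ∫ ω, (a - Y ω) ∂μ = a := by
      rw [integral_sub (integrable_const a) hint, hmean, integral_const]
      simp
    calc |a| = |∫ ω, (a - Y ω) ∂μ| := by rw [h1]
    _ ≤ ∫ ω, |a - Y ω| ∂μ := by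
        simpa [Real.norm_eq_abs] using
          norm_integral_le_integral_norm (μ := μ) (f := fun ω => a - Y ω)
  have hjensen : (∫ ω, |a - Y ω| ∂μ) ^ q ≤ ∫ ω, |a - Y ω| ^ q ∂μ := by
    have := (convexOn_rpow hq1).map_integral_le
      ((Real.continuous_rpow_const hq0).continuousOn) isClosed_Ici
      (Filter.Eventually.of_forall fun ω => Set.mem_Ici.2 (abs_nonneg _)) hIam hIminus
    exact this
  have haq : |a| ^ q ≤ ∫ ω, |a - Y ω| ^ q ∂μ :=
    le_trans (Real.rpow_le_rpow (abs_nonneg a) habs hq0) hjensen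
  -- main inner inequality
  have hmain : ∫ ω, |a + Y ω / 2| ^ q ∂μ
      ≤ (1 / 2) * ∫ ω, |a + Y ω| ^ q ∂μ + (1 / 2) * ∫ ω, |a - Y ω| ^ q ∂μ := by
    have hpt : ∀ ω, |a + Y ω / 2| ^ q ≤ (1/2) * |a + Y ω| ^ q + (1/2) * |a| ^ q := by
      intro ω
      have h := conv2_aux hq1 (a + Y ω) a
      have he : a + Y ω / 2 = (a + Y ω) / 2 + a / 2 := by ring
      rw [he]; exact h
    calc ∫ ω, |a + Y ω / 2| ^ q ∂μ
        ≤ ∫ ω, ((1/2) * |a + Y ω| ^ q + (1/2) * |a| ^ q) ∂μ :=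
          integral_mono hIhalf ((hIplus.const_mul _).add (integrable_const _)) hpt
    _ = (1/2) * ∫ ω, |a + Y ω| ^ q ∂μ + (1/2) * |a| ^ q := by
        rw [integral_add (hIplus.const_mul _) (integrable_const _),
          MeasureTheory.integral_const_mul, integral_const]
        simp
    _ ≤ (1 / 2) * ∫ ω, |a + Y ω| ^ q ∂μ + (1 / 2) * ∫ ω, |a - Y ω| ^ q ∂μ := by
        gcongr
  exact Real.rpow_le_rpow
    (integral_nonneg fun ω => Real.rpow_nonneg (abs_nonneg _) q) hmain
    (by positivity)
end

section
/- Single-variable contraction for negative noise: for q ≥ 2 there exists a constant c_q ∈ (0,1) (for q = 4 one may take c_q = 2/5) such that for any mean-zero real random variable Y with finite q-th moment and any a ∈ ℝ, ‖a − c_q Y‖_q ≤ ‖a + Y‖_q. -/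
/-!
It suffices to find `c` with `|1 - c y| ^ q + q (1 + c) y ≤ |1 + y| ^ q` for every real `y`:
scaling by `a` gives `|a - c y| ^ q + K y ≤ |a + y| ^ q` for some `K`, and the term `K Y`
vanishes in expectation. For `c = 1 / (6 q)` and moderate `y`, the scalar inequality compares
the upper bound `|1 + w| ^ q ≤ exp (q w) ≤ 1 + q w + (q w) ^ 2` at `w = -c y` with the lower bound
`|1 + y| ^ q ≥ 1 + q y + (q / 2) y ^ 2` (Bernoulli for `(1 + y) ^ 2` with exponent `q / 2`).
For large `|y|` it is a comparison of sizes, using superadditivity of `x ^ q` when `y > 0`.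
For `q = 4` and `c = 2 / 5` it is a polynomial inequality.
-/

open MeasureTheory

lemma sq_rpow_half_eq_abs_rpow (x q : ℝ) : (x ^ 2) ^ (q / 2) = |x| ^ q := by
  rw [← sq_abs, ← Real.rpow_natCast_mul (abs_nonneg x)]
  congr 1
  push_cast
  ring

lemma one_add_mul_add_mul_sq_le_abs_one_add_rpow {q : ℝ} (hq : 2 ≤ q) (t : ℝ) :
    1 + q * t + q / 2 * t ^ 2 ≤ |1 + t| ^ q := by
  have hBernoulli := one_add_mul_self_le_rpow_one_add (s := 2 * t + t ^ 2)
    (by nlinarith [sq_nonneg (1 + t)]) (p := q / 2) (by linarith)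
  rw [← sq_rpow_half_eq_abs_rpow]
  convert hBernoulli using 1 <;> ring_nf

lemma abs_one_add_rpow_le {q w : ℝ} (hq : 0 ≤ q) (hw : -1 ≤ w) (hqw : |q * w| ≤ 1) :
    |1 + w| ^ q ≤ 1 + q * w + (q * w) ^ 2 := by
  have hexp : |1 + w| ^ q ≤ Real.exp (q * w) := by
    rw [abs_of_nonneg (by linarith), mul_comm, Real.exp_mul]
    exact Real.rpow_le_rpow (by linarith) (by linarith [Real.add_one_le_exp w]) hq
  linarith [(abs_le.mp (Real.abs_exp_sub_one_sub_id_le hqw)).2]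

section ScalarInequality

variable {q : ℝ} (hq : 2 ≤ q) {y : ℝ}
include hq

lemma abs_one_sub_inv_mul_rpow_add_le_of_le_one (hy : y ≤ 1) :
    |1 - (6 * q)⁻¹ * y| ^ q + q * (1 + (6 * q)⁻¹) * y ≤ |1 + y| ^ q := by
  set c := (6 * q)⁻¹ with hc
  have hqcy : q * (c * y) = y / 6 := by rw [hc]; field_simp
  rcases le_or_gt y (-6) with hy6 | hy6
  · have hle : |1 - c * y| ≤ |1 + y| := by
      rw [abs_of_pos (by nlinarith), abs_of_neg (by linarith)]
      nlinarith
    have := Real.rpow_le_rpow (abs_nonneg _) hle (by linarith : 0 ≤ q)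
    nlinarith
  · have hupper := abs_one_add_rpow_le (q := q) (w := -(c * y)) (by linarith)
      (by nlinarith) (by rw [mul_neg, hqcy, abs_le]; constructor <;> linarith)
    have hlower := one_add_mul_add_mul_sq_le_abs_one_add_rpow hq y
    rw [← sub_eq_add_neg, mul_neg, hqcy] at hupper
    nlinarith [sq_nonneg y]

lemma abs_one_sub_inv_mul_rpow_add_le_of_one_le (hy : 1 ≤ y) :
    |1 - (6 * q)⁻¹ * y| ^ q + q * (1 + (6 * q)⁻¹) * y ≤ |1 + y| ^ q := by
  set c := (6 * q)⁻¹ with hc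
  have hqcy : q * (c * y) = y / 6 := by rw [hc]; field_simp
  rcases le_or_gt (c * y) 1 with hcy | hcy
  · have hle : |1 - c * y| ^ q ≤ 1 :=
      Real.rpow_le_one (abs_nonneg _) (by rw [abs_le]; constructor <;> nlinarith) (by linarith)
    have hlower := one_add_mul_add_mul_sq_le_abs_one_add_rpow hq y
    nlinarith
  · set b := (1 - c) * y + 2 with hb
    have hby : 11 / 12 * y ≤ b := by nlinarith
    have hb1 : 1 ≤ b := by nlinarith
    have hsuper := Real.add_rpow_le_rpow_add (by linarith : 0 ≤ c * y - 1) (by linarith : 0 ≤ b)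
      (by linarith : (1 : ℝ) ≤ q)
    have hsq : b ^ 2 ≤ b ^ q := by
      rw [← Real.rpow_two]; exact Real.rpow_le_rpow_of_exponent_le hb1 hq
    have hquad : q * (1 + c) * y ≤ b ^ 2 := by
      nlinarith [mul_le_mul hby hby (by linarith) (by linarith)]
    rw [abs_of_nonpos (by linarith), neg_sub, abs_of_pos (by linarith)]
    rw [show c * y - 1 + b = 1 + y by rw [hb]; ring] at hsuper
    linarith

end ScalarInequality

lemma abs_one_sub_two_fifths_mul_rpow_four_add_le (y : ℝ) :
    |1 - 2 / 5 * y| ^ (4 : ℝ) + 4 * (1 + 2 / 5) * y ≤ |1 + y| ^ (4 : ℝ) := by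
  have habs_rpow_four : ∀ t : ℝ, |t| ^ (4 : ℝ) = t ^ 4 := fun t => by
    rw [show (4 : ℝ) = (4 : ℕ) by norm_num, Real.rpow_natCast, pow_abs,
      abs_of_nonneg (by positivity)]
  rw [habs_rpow_four, habs_rpow_four]
  -- `625 ((1 + y) ^ 4 - (1 - 2 y / 5) ^ 4 - 28 y / 5) = y ^ 2 (609 y ^ 2 + 2660 y + 3150)`
  have hquad : 0 ≤ 609 * y ^ 2 + 2660 * y + 3150 := by nlinarith [sq_nonneg (609 * y + 1330)]
  nlinarith [mul_nonneg (sq_nonneg y) hquad]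

lemma exists_abs_one_sub_mul_rpow_add_le {q : ℝ} (hq : 2 ≤ q) :
    ∃ c : ℝ, 0 < c ∧ c < 1 ∧ (q = 4 → c = 2 / 5) ∧
      ∀ y : ℝ, |1 - c * y| ^ q + q * (1 + c) * y ≤ |1 + y| ^ q := by
  by_cases h4 : q = 4
  · subst h4
    exact ⟨2 / 5, by norm_num, by norm_num, fun _ => rfl,
      abs_one_sub_two_fifths_mul_rpow_four_add_le⟩
  refine ⟨(6 * q)⁻¹, by positivity, inv_lt_one_of_one_lt₀ (by linarith), fun h => absurd h h4,
    fun y => ?_⟩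
  rcases le_total y 1 with hy | hy
  · exact abs_one_sub_inv_mul_rpow_add_le_of_le_one hq hy
  · exact abs_one_sub_inv_mul_rpow_add_le_of_one_le hq hy

lemma exists_abs_sub_mul_rpow_add_mul_le {q c : ℝ} (hq : 0 ≤ q) (hc₀ : 0 ≤ c) (hc₁ : c ≤ 1)
    (hkey : ∀ y : ℝ, |1 - c * y| ^ q + q * (1 + c) * y ≤ |1 + y| ^ q) (a : ℝ) :
    ∃ K : ℝ, ∀ y : ℝ, |a - c * y| ^ q + K * y ≤ |a + y| ^ q := by
  rcases eq_or_ne a 0 with rfl | ha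
  · refine ⟨0, fun y => ?_⟩
    rw [zero_mul, add_zero, zero_sub, zero_add, abs_neg]
    have hle : |c * y| ≤ |y| := by
      rw [abs_mul, abs_of_nonneg hc₀]; nlinarith [abs_nonneg y]
    exact Real.rpow_le_rpow (abs_nonneg _) hle hq
  refine ⟨q * (1 + c) * |a| ^ q / a, fun y => ?_⟩
  have hscale : ∀ t : ℝ, |a| ^ q * |t| ^ q = |a * t| ^ q := fun t => by
    rw [← Real.mul_rpow (abs_nonneg a) (abs_nonneg t), abs_mul]
  have hsub : a * (1 - c * (y / a)) = a - c * y := by field_simp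
  have hadd : a * (1 + y / a) = a + y := by field_simp
  calc |a - c * y| ^ q + q * (1 + c) * |a| ^ q / a * y
      = |a| ^ q * (|1 - c * (y / a)| ^ q + q * (1 + c) * (y / a)) := by
        rw [mul_add (|a| ^ q), hscale, hsub]; ring
    _ ≤ |a| ^ q * |1 + y / a| ^ q := by gcongr; exact hkey _
    _ = |a + y| ^ q := by rw [hscale, hadd]

lemma MeasureTheory.Integrable.abs_const_add_mul_rpow {Ω : Type*} [MeasurableSpace Ω]
    {μ : Measure Ω} [IsFiniteMeasure μ] {Y : Ω → ℝ} {q : ℝ} (hq : 0 < q)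
    (hY : AEStronglyMeasurable Y μ) (hYq : Integrable (fun ω => |Y ω| ^ q) μ) (a b : ℝ) :
    Integrable (fun ω => |a + b * Y ω| ^ q) μ := by
  have hLp : MemLp Y (ENNReal.ofReal q) μ := by
    rw [← integrable_norm_rpow_iff hY (by simpa using hq) ENNReal.ofReal_ne_top,
      ENNReal.toReal_ofReal hq.le]
    exact hYq
  simpa [ENNReal.toReal_ofReal hq.le] using
    ((memLp_const a).add (hLp.const_mul b)).integrable_norm_rpow'

lemma integral_comp_le_of_add_mul_le {Ω : Type*} [MeasurableSpace Ω] {μ : Measure Ω}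
    {Y : Ω → ℝ} {f g : ℝ → ℝ} {K : ℝ} (hfg : ∀ y, f y + K * y ≤ g y)
    (hf : Integrable (fun ω => f (Y ω)) μ) (hg : Integrable (fun ω => g (Y ω)) μ)
    (hY : Integrable Y μ) (hmean : ∫ ω, Y ω ∂μ = 0) :
    ∫ ω, f (Y ω) ∂μ ≤ ∫ ω, g (Y ω) ∂μ :=
  calc ∫ ω, f (Y ω) ∂μ ≤ ∫ ω, (g (Y ω) - K * Y ω) ∂μ :=
        integral_mono hf (hg.sub (hY.const_mul K)) fun ω => by linarith [hfg (Y ω)]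
    _ = ∫ ω, g (Y ω) ∂μ := by
        rw [integral_sub hg (hY.const_mul K), integral_const_mul, hmean, mul_zero, sub_zero]

/-- single-variable contraction for negative noise. For `q ≥ 2`
there is a constant `c_q ∈ (0,1)` (for `q = 4` one may take `c_q = 2/5`) such
that for every mean-zero real random variable `Y` with finite `q`-th moment and
every `a ∈ ℝ`, `‖a − c_q Y‖_q ≤ ‖a + Y‖_q`. -/
theorem negative_noise_contraction (q : ℝ) (hq : 2 ≤ q) :
    ∃ c : ℝ, 0 < c ∧ c < 1 ∧ (q = 4 → c = 2 / 5) ∧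
      ∀ (Ω : Type) [MeasurableSpace Ω] (μ : Measure Ω), IsProbabilityMeasure μ →
        ∀ Y : Ω → ℝ, Integrable Y μ → (∫ ω, Y ω ∂μ) = 0 →
          Integrable (fun ω => |Y ω| ^ q) μ →
          ∀ a : ℝ,
            (∫ ω, |a - c * Y ω| ^ q ∂μ) ^ (1 / q)
              ≤ (∫ ω, |a + Y ω| ^ q ∂μ) ^ (1 / q) := by
  obtain ⟨c, hc₀, hc₁, hc₄, hkey⟩ := exists_abs_one_sub_mul_rpow_add_le hq
  refine ⟨c, hc₀, hc₁, hc₄, fun Ω _ μ _ Y hY hmean hYq a => ?_⟩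
  have hq₀ : 0 < q := by linarith
  obtain ⟨K, hK⟩ := exists_abs_sub_mul_rpow_add_mul_le hq₀.le hc₀.le hc₁.le hkey a
  have hint (b : ℝ) := hYq.abs_const_add_mul_rpow hq₀ hY.aestronglyMeasurable a b
  refine Real.rpow_le_rpow (integral_nonneg fun ω => by positivity)
    (integral_comp_le_of_add_mul_le hK ?_ ?_ hY hmean) (by positivity)
  · simpa [sub_eq_add_neg] using hint (-c)
  · simpa using hint 1
end

section
/- Restriction formula for Efron-Stein components: for a d-partite complex X, a function f, and disjoint I, B ⊆ [d], the component f^{=I∪B} evaluated at a point with I-coordinates y_I and B-coordinates x_B satisfies f^{=I∪B}(y_I, x_B) = ∑_{J ⊆ I} (−1)^{|I|−|J|} (f|_{y_J})^{=B}(x_B), where f|_{y_J} denotes the restriction of f to the link of y_J. -/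
open Finset BigOperators


/-- Conditional expectation operator `E_T` on a `d`-partite space:
`E_T f (x) = E[f(y) | y_T = x_T]` under the (finitely supported) measure `μ`. -/
noncomputable def projE {d : ℕ} {Ω : Type} [Fintype Ω] [DecidableEq Ω]
    (μ : (Fin d → Ω) → ℝ) (T : Finset (Fin d))
    (f : (Fin d → Ω) → ℝ) (x : Fin d → Ω) : ℝ :=
  (∑ y : Fin d → Ω, if ∀ i ∈ T, y i = x i then μ y * f y else 0) /
  (∑ y : Fin d → Ω, if ∀ i ∈ T, y i = x i then μ y else 0)

/-- Efron–Stein component `f^{=S} = ∑_{T ⊆ S} (-1)^{|S|-|T|} E_T f`. -/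
noncomputable def esComp {d : ℕ} {Ω : Type} [Fintype Ω] [DecidableEq Ω]
    (μ : (Fin d → Ω) → ℝ) (S : Finset (Fin d))
    (f : (Fin d → Ω) → ℝ) : (Fin d → Ω) → ℝ :=
  fun x => ∑ T ∈ S.powerset, (-1 : ℝ) ^ (S.card - T.card) * projE μ T f x

/-- Conditional (link) measure obtained from `μ` by conditioning the coordinates
in `R` to agree with `z`. -/
noncomputable def condMeasure {d : ℕ} {Ω : Type} [Fintype Ω] [DecidableEq Ω]
    (μ : (Fin d → Ω) → ℝ) (R : Finset (Fin d)) (z : Fin d → Ω) :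
    (Fin d → Ω) → ℝ :=
  fun y => (if ∀ i ∈ R, y i = z i then μ y else 0) /
    (∑ y' : Fin d → Ω, if ∀ i ∈ R, y' i = z i then μ y' else 0)

/-!
Conditioning on the `J`-coordinates of `x` and then averaging over agreement on `T` is the
same as averaging over agreement on `J ∪ T`, so `E_T` in the link of `x_J`, evaluated at `x`,
is `E_{J ∪ T} f (x)`. Expanding both sides of the formula into conditional expectations, the
subsets `S ⊆ I ∪ B` correspond to the pairs `(S ∩ I, S ∩ B)`, and the sign
`(-1)^{|I ∪ B| - |S|}` splits as `(-1)^{|I| - |S ∩ I|} (-1)^{|B| - |S ∩ B|}`.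
-/

theorem Finset.sum_powerset_union_of_disjoint {α M : Type*} [DecidableEq α] [AddCommMonoid M]
    {I B : Finset α} (h : Disjoint I B) (g : Finset α → M) :
    ∑ S ∈ (I ∪ B).powerset, g S = ∑ J ∈ I.powerset, ∑ T ∈ B.powerset, g (J ∪ T) := by
  rw [← sum_product']
  refine sum_nbij' (fun S => (S ∩ I, S ∩ B)) (fun p => p.1 ∪ p.2) ?_ ?_ ?_ ?_ fun S hS => ?_
  · intro S _
    simp [inter_subset_right]
  · rintro ⟨J, T⟩ hp
    simp only [mem_product, mem_powerset] at hp ⊢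
    exact union_subset_union hp.1 hp.2
  · intro S hS
    rw [← inter_union_distrib_left, inter_eq_left.mpr (mem_powerset.mp hS)]
  · rintro ⟨J, T⟩ hp
    simp only [mem_product, mem_powerset] at hp
    dsimp only
    rw [union_inter_distrib_right, union_inter_distrib_right, inter_eq_left.mpr hp.1,
      inter_eq_left.mpr hp.2, disjoint_iff_inter_eq_empty.mp (h.symm.mono_left hp.2),
      disjoint_iff_inter_eq_empty.mp (h.mono_left hp.1), union_empty, empty_union]
  · rw [← inter_union_distrib_left, inter_eq_left.mpr (mem_powerset.mp hS)]

theorem pow_card_union_sub_card_union {α R : Type*} [DecidableEq α] [Monoid R] (a : R)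
    {I B J T : Finset α} (hIB : Disjoint I B) (hJ : J ⊆ I) (hT : T ⊆ B) :
    a ^ (#(I ∪ B) - #(J ∪ T)) = a ^ (#I - #J) * a ^ (#B - #T) := by
  rw [card_union_of_disjoint hIB, card_union_of_disjoint (hIB.mono hJ hT), ← pow_add]
  have := card_le_card hJ
  have := card_le_card hT
  congr 1
  omega

section Conditioning

variable {d : ℕ} {Ω : Type} [Fintype Ω] [DecidableEq Ω] (μ : (Fin d → Ω) → ℝ)

theorem sum_agree_le_sum_agree_of_subset (hμ : ∀ y, 0 ≤ μ y) {R R' : Finset (Fin d)}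
    (hR : R ⊆ R') (x : Fin d → Ω) :
    (∑ y : Fin d → Ω, if ∀ i ∈ R', y i = x i then μ y else 0)
      ≤ ∑ y : Fin d → Ω, if ∀ i ∈ R, y i = x i then μ y else 0 := by
  refine sum_le_sum fun y _ => ?_
  by_cases h' : ∀ i ∈ R', y i = x i
  · rw [if_pos h', if_pos fun i hi => h' i (hR hi)]
  · rw [if_neg h']
    exact ite_nonneg (hμ y) le_rfl

theorem ite_agree_condMeasure_mul (J T : Finset (Fin d)) (x y : Fin d → Ω) (c : ℝ) :
    (if ∀ i ∈ T, y i = x i then condMeasure μ J x y * c else 0)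
      = (if ∀ i ∈ J ∪ T, y i = x i then μ y * c else 0)
        / ∑ y' : Fin d → Ω, if ∀ i ∈ J, y' i = x i then μ y' else 0 := by
  simp only [condMeasure, forall_mem_union]
  split_ifs <;> simp_all [div_mul_eq_mul_div]

theorem projE_condMeasure (hμ : ∀ y, 0 ≤ μ y) (J T : Finset (Fin d))
    (f : (Fin d → Ω) → ℝ) (x : Fin d → Ω) :
    projE (condMeasure μ J x) T f x = projE μ (J ∪ T) f x := by
  set Z := ∑ y' : Fin d → Ω, if ∀ i ∈ J, y' i = x i then μ y' else 0
  have hnum (y : Fin d → Ω) :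
      (if ∀ i ∈ T, y i = x i then condMeasure μ J x y * f y else 0)
        = (if ∀ i ∈ J ∪ T, y i = x i then μ y * f y else 0) / Z :=
    ite_agree_condMeasure_mul μ J T x y (f y)
  have hden (y : Fin d → Ω) :
      (if ∀ i ∈ T, y i = x i then condMeasure μ J x y else 0)
        = (if ∀ i ∈ J ∪ T, y i = x i then μ y else 0) / Z := by
    simpa using ite_agree_condMeasure_mul μ J T x y 1
  simp only [projE, hnum, hden, ← sum_div]
  rcases eq_or_ne Z 0 with hZ0 | hZ0
  · -- An empty link: by `a / 0 = 0` the left side is `0`, and so is the right side because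
    -- the smaller link `x_{J ∪ T}` then has mass `0` as well.
    have hmass : (∑ y : Fin d → Ω, if ∀ i ∈ J ∪ T, y i = x i then μ y else 0) = 0 :=
      le_antisymm ((sum_agree_le_sum_agree_of_subset μ hμ subset_union_left x).trans_eq hZ0)
        (sum_nonneg fun y _ => ite_nonneg (hμ y) le_rfl)
    rw [hZ0, hmass, div_zero, div_zero, div_zero]
  · exact div_div_div_cancel_right₀ hZ0 _ _

end Conditioning

/-- restriction formula for Efron–Stein components. For disjoint
`I, B ⊆ [d]`, the component `f^{=I∪B}` evaluated at `x` equals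
`∑_{J ⊆ I} (−1)^{|I|−|J|} (f|_{x_J})^{=B}(x)`, where `f|_{x_J}` is the
restriction of `f` to the link of `x_J` (the measure conditioned on the
`J`-coordinates of `x`). -/
theorem es_restriction_formula {d : ℕ} {Ω : Type} [Fintype Ω] [DecidableEq Ω]
    (μ : (Fin d → Ω) → ℝ) (hμ0 : ∀ y, 0 ≤ μ y)
    (f : (Fin d → Ω) → ℝ) (I B : Finset (Fin d)) (hIB : Disjoint I B)
    (x : Fin d → Ω) :
    esComp μ (I ∪ B) f x
      = ∑ J ∈ I.powerset,
          (-1 : ℝ) ^ (I.card - J.card) * esComp (condMeasure μ J x) B f x := by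
  simp only [esComp, mul_sum, projE_condMeasure μ hμ0]
  rw [sum_powerset_union_of_disjoint hIB]
  refine sum_congr rfl fun J hJ => sum_congr rfl fun T hT => ?_
  rw [pow_card_union_sub_card_union _ hIB (mem_powerset.mp hJ) (mem_powerset.mp hT), mul_assoc]
end
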